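/- Let A be an implication algebra and φ a closure endomorphism of A. Then for all x, y ∈ A: φ(x ∨ y) = φ(x) ∨ φ(y) = x ∨ φ(y) = φ(x) ∨ y, where x ∨ y denotes (x → y) → y. -/
import Mathlib


/-- A Hilbert algebra: a set with implication `imp` and constant `one`. -/
class HilbertAlgebra (A : Type*) where
  imp : A → A → A
  one : A
  imp_one : ∀ x y : A, imp x (imp y x) = one
  imp_distrib : ∀ x y z : A,
    imp (imp x (imp y z)) (imp (imp x y) (imp x z)) = one
  imp_antisymm : ∀ x y : A, imp x y = one → imp y x = one → x = y

namespace HilbertAlgebra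

variable {A : Type*} [HilbertAlgebra A]

/-- The natural order of a Hilbert algebra: `x ≤ y` iff `x → y = 1`. -/
def le (x y : A) : Prop := imp x y = one

/-- A closure endomorphism: an endomorphism that is also a closure operator. -/
def IsClosureEndo (φ : A → A) : Prop :=
  (∀ x y : A, φ (imp x y) = imp (φ x) (φ y)) ∧
  (∀ x : A, le x (φ x)) ∧
  (∀ x : A, φ (φ x) = φ x) ∧
  (∀ x y : A, le x y → le (φ x) (φ y))

section Aux

lemma one_imp' (hcon : ∀ x y : A, imp (imp x y) x = x) (x : A) : imp one x = x := by
  have h := hcon x (imp x x)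
  rwa [imp_one x x] at h

lemma mp' (hcon : ∀ x y : A, imp (imp x y) x = x) {a b : A} (h1 : imp a b = one) (h2 : a = one) : b = one := by
  rw [h2] at h1
  rwa [one_imp' hcon b] at h1

lemma refl' (hcon : ∀ x y : A, imp (imp x y) x = x) (x : A) : imp x x = one := by
  have k1 : imp x (imp (imp x x) x) = one := imp_one x (imp x x)
  have s := imp_distrib x (imp x x) x
  have h2 := mp' hcon s k1
  exact mp' hcon h2 (imp_one x x)

lemma imp_top (hcon : ∀ x y : A, imp (imp x y) x = x) (x : A) : imp x one = one := by
  have := imp_one x x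
  rwa [refl' hcon x] at this

lemma trans' (hcon : ∀ x y : A, imp (imp x y) x = x) {x y z : A} (hxy : imp x y = one) (hyz : imp y z = one) :
    imp x z = one := by
  have h1 : imp x (imp y z) = one := by rw [hyz]; exact imp_top hcon x
  have h2 := mp' hcon (imp_distrib x y z) h1
  exact mp' hcon h2 hxy

lemma antitone' (hcon : ∀ x y : A, imp (imp x y) x = x) {x y : A} (h : imp x y = one) (z : A) :
    imp (imp y z) (imp x z) = one := by
  have s := imp_distrib x y z
  rw [h, one_imp' hcon] at s
  exact trans' hcon (imp_one (imp y z) x) s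

lemma mono' (hcon : ∀ x y : A, imp (imp x y) x = x) {y z : A} (h : imp y z = one) (x : A) :
    imp (imp x y) (imp x z) = one := by
  have s := imp_distrib x y z
  rw [h, imp_top hcon, one_imp' hcon] at s
  exact s

lemma upper1 (hcon : ∀ x y : A, imp (imp x y) x = x) (x y : A) : imp x (imp (imp x y) y) = one := by
  have s := imp_distrib (imp x y) x y
  rw [refl' hcon, one_imp' hcon, hcon x y] at s
  exact s

lemma upper2 (x y : A) : imp y (imp (imp x y) y) = one :=
  imp_one y (imp x y)

lemma lub' (hcon : ∀ x y : A, imp (imp x y) x = x) {x y c : A} (hx : imp x c = one) (hy : imp y c = one) :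
    imp (imp (imp x y) y) c = one := by
  have step1 := mono' hcon hy (imp x y)
  have t := antitone' hcon (antitone' hcon hx y) c
  rw [hcon c y] at t
  exact trans' hcon step1 t

end Aux

/-- In an implication algebra, where `x ∨ y = (x → y) → y`, every closure
endomorphism satisfies `φ(x ∨ y) = φ x ∨ φ y = x ∨ φ y = φ x ∨ y`. -/
theorem closureEndo_join (himp : ∀ x y : A, imp (imp x y) x = x)
    (φ : A → A) (hφ : IsClosureEndo φ) (x y : A) :
    φ (imp (imp x y) y) = imp (imp (φ x) (φ y)) (φ y) ∧
    φ (imp (imp x y) y) = imp (imp x (φ y)) (φ y) ∧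
    φ (imp (imp x y) y) = imp (imp (φ x) y) y := by
  obtain ⟨hom, incl, idem, monφ⟩ := hφ
  -- key lemma: φ a → φ b = a → φ b
  have L : ∀ a b : A, imp (φ a) (φ b) = imp a (φ b) := by
    intro a b
    refine imp_antisymm _ _ (antitone' himp (incl a) (φ b)) ?_
    have h := incl (imp a (φ b))
    unfold le at h
    rw [hom, idem] at h
    exact h
  have part1 : φ (imp (imp x y) y) = imp (imp (φ x) (φ y)) (φ y) := by
    rw [hom, hom]
  refine ⟨part1, ?_, ?_⟩
  · rw [part1, L x y]
  · set c := imp (imp (φ x) y) y with hc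
    have le1 : imp c (φ (imp (imp x y) y)) = one := by
      have h := incl c
      unfold le at h
      rw [hc, hom, hom, idem] at h
      rw [part1]
      exact h
    have hx' : imp (φ x) c = one := upper1 himp (φ x) y
    have hy' : imp (φ y) c = one := by
      -- via d = (y → φ x) → φ x
      have hφd : φ (imp (imp y (φ x)) (φ x)) = imp (imp y (φ x)) (φ x) := by
        rw [hom, hom, idem, L y x]
      have hyd := monφ y (imp (imp y (φ x)) (φ x)) (upper1 himp y (φ x))
      unfold le at hyd
      rw [hφd] at hyd
      have hdc : imp (imp (imp y (φ x)) (φ x)) c = one :=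
        lub' himp (upper2 (φ x) y) hx'
      exact trans' himp hyd hdc
    have le2 : imp (φ (imp (imp x y) y)) c = one := by
      rw [part1]
      exact lub' himp hx' hy'
    exact imp_antisymm _ _ le2 le1

end HilbertAlgebra
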